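/- Let F be a field, σ a field automorphism of F extended to P¹(F) with σ(∞)=∞, and suppose maps F_i on P¹(F) satisfy F_i = σ^{−i} ∘ F_0 ∘ σ^{i}. Let (g_j)_{j≥0} be a backward orbit: g_0 = ∞ and g_i = F_i(g_{i+1}) for i ≥ 0. If g_j ≠ ∞ for all j > 0, then the points σ^{j−1}(g_j), j = 1, 2, 3, …, are pairwise distinct. -/
import Mathlib


/-- If the backward orbit `(g j)` of `∞` under the `σ`-equivariant family `Fm i`
never returns to `∞`, then the twisted points `σ^[j-1] (g j)`, `j ≥ 1`, are
pairwise distinct. -/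
theorem backward_orbit_twisted_points_distinct (F : Type*) [Field F] (σ : F ≃+* F)
    (σ' : WithTop F → WithTop F) (hσ' : σ' = WithTop.map σ)
    (Fm : ℕ → WithTop F → WithTop F)
    (hequiv : ∀ i : ℕ, Fm i ∘ σ' = σ' ∘ Fm (i + 1))
    (g : ℕ → WithTop F) (hg0 : g 0 = ⊤) (hg : ∀ i : ℕ, g i = Fm i (g (i + 1)))
    (hne : ∀ j : ℕ, 0 < j → g j ≠ ⊤) :
    ∀ j₁ j₂ : ℕ, 1 ≤ j₁ → 1 ≤ j₂ →
      σ'^[j₁ - 1] (g j₁) = σ'^[j₂ - 1] (g j₂) → j₁ = j₂ := by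
  have htopfix : σ' ⊤ = ⊤ := by subst hσ'; rfl
  have hinj : Function.Injective σ' := by
    subst hσ'
    exact Option.map_injective σ.injective
  have hitertop : ∀ m : ℕ, σ'^[m] ⊤ = ⊤ := fun m => Function.iterate_fixed htopfix m
  have hcomm : ∀ k s : ℕ, ∀ x, Fm k (σ'^[s] x) = σ'^[s] (Fm (k + s) x) := by
    intro k s
    induction s generalizing k with
    | zero => simp
    | succ s ih =>
      intro x
      rw [Function.iterate_succ', Function.comp_apply]
      have h1 : Fm k (σ' (σ'^[s] x)) = σ' (Fm (k + 1) (σ'^[s] x)) := congrFun (hequiv k) _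
      rw [h1, ih (k + 1) x]
      simp only [Function.comp_apply]
      have : k + 1 + s = k + (s + 1) := by omega
      rw [this]
  -- main contradiction helper
  have key : ∀ a b : ℕ, 1 ≤ b → b < a → σ'^[a - 1] (g a) = σ'^[b - 1] (g b) → False := by
    intro a b hb hba heq
    set m := a - b with hm
    have hmpos : 0 < m := by omega
    -- cancel σ'^[b-1]
    have h1 : σ'^[b - 1] (σ'^[m] (g a)) = σ'^[b - 1] (g b) := by
      rw [← Function.iterate_add_apply]
      have : b - 1 + m = a - 1 := by omega
      rw [this, heq]
    have h2 : σ'^[m] (g a) = g b := (hinj.iterate (b - 1)) h1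
    have ha : a = b + m := by omega
    rw [ha] at h2
    -- descend
    have desc : ∀ t, t ≤ b → σ'^[m] (g (b - t + m)) = g (b - t) := by
      intro t
      induction t with
      | zero => simpa using h2
      | succ t ih =>
        intro ht
        have ih' := ih (by omega)
        have hbt : b - t = (b - (t + 1)) + 1 := by omega
        set k := b - (t + 1) with hk
        rw [hbt] at ih'
        calc σ'^[m] (g (k + m)) = σ'^[m] (Fm (k + m) (g (k + m + 1))) := by rw [← hg (k + m)]
          _ = Fm k (σ'^[m] (g (k + 1 + m))) := by
              rw [hcomm k m, show k + 1 + m = k + m + 1 from by omega]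
          _ = Fm k (g (k + 1)) := by rw [ih']
          _ = g k := (hg k).symm
    have hfin := desc b (le_refl b)
    simp only [Nat.sub_self, Nat.zero_add, hg0] at hfin
    exact hne m hmpos ((hinj.iterate m) (by rw [hfin, hitertop m]))
  intro j₁ j₂ h1 h2 heq
  rcases lt_trichotomy j₁ j₂ with h | h | h
  · exact absurd heq.symm (fun he => key j₂ j₁ h1 h he)
  · exact h
  · exact absurd heq (fun he => key j₁ j₂ h2 h he)
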